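/- For real $r, s \ge 0$ and $\phi \in \mathbb{R}$, $\max_\theta \left(|r e^{i\phi} + s e^{i\theta}| + |r + s e^{i\theta}|\right) = 2\sqrt{r^2 + s^2 + 2rs|\cos(\phi/2)|}$. -/

import Mathlib

open Complex Real

/-!
By the law of cosines the two distances are `√(r² + s² + 2rs cos (φ - θ))` and
`√(r² + s² + 2rs cos θ)`. Concavity of the square root bounds their sum by twice the square root
of the mean of the radicands, and `cos (φ - θ) + cos θ = 2 cos (φ/2) cos (φ/2 - θ) ≤ 2 |cos (φ/2)|`.
Both bounds are attained at the isosceles configuration `θ = φ/2` or `θ = φ/2 + π`.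
-/

lemma norm_mul_exp_add_mul_exp (r s α β : ℝ) :
    ‖(r : ℂ) * exp (α * I) + (s : ℂ) * exp (β * I)‖ =
      √(r ^ 2 + s ^ 2 + 2 * r * s * Real.cos (α - β)) := by
  rw [← Real.sqrt_sq (norm_nonneg _), Complex.sq_norm, Complex.normSq_apply, Real.cos_sub]
  congr 1
  simp only [add_re, add_im, re_ofReal_mul, im_ofReal_mul, exp_ofReal_mul_I_re,
    exp_ofReal_mul_I_im]
  linear_combination r ^ 2 * Real.sin_sq_add_cos_sq α + s ^ 2 * Real.sin_sq_add_cos_sq β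

lemma norm_add_mul_exp (r s β : ℝ) :
    ‖(r : ℂ) + (s : ℂ) * exp (β * I)‖ = √(r ^ 2 + s ^ 2 + 2 * r * s * Real.cos β) := by
  simpa using norm_mul_exp_add_mul_exp r s 0 β

lemma cos_sub_add_cos_le (φ θ : ℝ) : Real.cos (φ - θ) + Real.cos θ ≤ 2 * |Real.cos (φ / 2)| := by
  have hsum : Real.cos (φ - θ) + Real.cos θ = 2 * Real.cos (φ / 2) * Real.cos (φ / 2 - θ) := by
    rw [Real.cos_add_cos]; ring_nf
  calc Real.cos (φ - θ) + Real.cos θ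
      ≤ |2 * Real.cos (φ / 2) * Real.cos (φ / 2 - θ)| := hsum ▸ le_abs_self _
    _ = 2 * |Real.cos (φ / 2)| * |Real.cos (φ / 2 - θ)| := by rw [abs_mul, abs_mul, abs_two]
    _ ≤ 2 * |Real.cos (φ / 2)| := mul_le_of_le_one_right (by positivity) (abs_cos_le_one _)

lemma exists_cos_sub_eq_abs_and_cos_eq_abs (φ : ℝ) :
    ∃ θ, Real.cos (φ - θ) = |Real.cos (φ / 2)| ∧ Real.cos θ = |Real.cos (φ / 2)| := by
  rcases le_or_gt 0 (Real.cos (φ / 2)) with h | h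
  · refine ⟨φ / 2, ?_, abs_of_nonneg h |>.symm⟩
    rw [abs_of_nonneg h]; ring_nf
  · refine ⟨φ / 2 + π, ?_, ?_⟩
    · rw [abs_of_neg h, show φ - (φ / 2 + π) = φ / 2 - π by ring, Real.cos_sub_pi]
    · rw [abs_of_neg h, Real.cos_add_pi]

lemma sqrt_add_sqrt_le_two_mul_sqrt {x y M : ℝ} (hx : 0 ≤ x) (hy : 0 ≤ y) (h : x + y ≤ 2 * M) :
    √x + √y ≤ 2 * √M := by
  have hM : 0 ≤ M := by linarith
  nlinarith [sq_sqrt hx, sq_sqrt hy, sq_sqrt hM, sqrt_nonneg x, sqrt_nonneg y, sqrt_nonneg M,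
    sq_nonneg (√x - √y), sq_nonneg (√x + √y - 2 * √M)]

theorem stmt_8 (r s φ : ℝ) (hr : 0 ≤ r) (hs : 0 ≤ s) :
    IsGreatest
      {x : ℝ | ∃ θ : ℝ, x =
        ‖(r : ℂ) * Complex.exp (φ * Complex.I) + (s : ℂ) * Complex.exp (θ * Complex.I)‖ +
        ‖(r : ℂ) + (s : ℂ) * Complex.exp (θ * Complex.I)‖}
      (2 * Real.sqrt (r ^ 2 + s ^ 2 + 2 * r * s * |Real.cos (φ / 2)|)) := by
  simp only [norm_mul_exp_add_mul_exp, norm_add_mul_exp]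
  have hrs : 0 ≤ r * s := mul_nonneg hr hs
  have radicand_nonneg (t : ℝ) : 0 ≤ r ^ 2 + s ^ 2 + 2 * r * s * Real.cos t := by
    nlinarith [neg_one_le_cos t, sq_nonneg (r - s)]
  constructor
  · obtain ⟨θ, hφθ, hθ⟩ := exists_cos_sub_eq_abs_and_cos_eq_abs φ
    exact ⟨θ, by rw [hφθ, hθ]; ring⟩
  · rintro _ ⟨θ, rfl⟩
    refine sqrt_add_sqrt_le_two_mul_sqrt (radicand_nonneg _) (radicand_nonneg _) ?_
    nlinarith [cos_sub_add_cos_le φ θ]
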